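/- arXiv:1703.00569 — 7 statements merged into one kernel-verified Lean document; each statement's English description precedes it below -/
import Mathlib

section
/- Let X be a weakly Hausdorff topological space. Then for every compact Hausdorff space K and every continuous map u : K → X, the image u(K), equipped with the subspace topology from X, is a compact Hausdorff space. -/
/-!
The corestriction `K → u(K)` of `u` is a continuous surjection, and it is a closed map because
a closed subset of `K` is again compact Hausdorff, so its image is closed in `X`. A closed
continuous surjection carries normality of `K` over to `u(K)`, and `u(K)` is T₁ because points
of `X` are images of the one-point space. A normal T₁ space is Hausdorff.
-/

open Set Function

theorem IsClosedMap.normalSpace_of_surjective {X Y : Type*} [TopologicalSpace X]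
    [TopologicalSpace Y] [NormalSpace X] {f : X → Y} (hcont : Continuous f)
    (hclosed : IsClosedMap f) (hsurj : Surjective f) : NormalSpace Y := by
  refine ⟨fun A B hA hB hAB => ?_⟩
  obtain ⟨U, V, hU, hV, hAU, hBV, hUV⟩ :=
    normal_separation (hA.preimage hcont) (hB.preimage hcont) (hAB.preimage f)
  -- `y ∉ f '' Uᶜ` means the whole fibre over `y` lies in `U`.
  refine ⟨(f '' Uᶜ)ᶜ, (f '' Vᶜ)ᶜ, (hclosed _ hU.isClosed_compl).isOpen_compl,
    (hclosed _ hV.isClosed_compl).isOpen_compl, ?_, ?_, ?_⟩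
  · rintro _ hy ⟨x, hxU, rfl⟩
    exact hxU (hAU hy)
  · rintro _ hy ⟨x, hxV, rfl⟩
    exact hxV (hBV hy)
  · refine Set.disjoint_left.2 fun y hyU hyV => ?_
    obtain ⟨x, rfl⟩ := hsurj y
    have hxU : x ∈ U := by_contra fun h => hyU ⟨x, h, rfl⟩
    have hxV : x ∈ V := by_contra fun h => hyV ⟨x, h, rfl⟩
    exact hUV.le_bot ⟨hxU, hxV⟩

theorem t1Space_of_weaklyHausdorff {X : Type*} [TopologicalSpace X]
    (hWH : ∀ (K : Type) [TopologicalSpace K] [CompactSpace K] [T2Space K] (u : C(K, X)),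
      IsClosed (Set.range u)) :
    T1Space X := by
  refine ⟨fun x => ?_⟩
  simpa [Set.range_const] using hWH PUnit ⟨fun _ => x, continuous_const⟩

theorem isClosedMap_of_weaklyHausdorff {X : Type*} [TopologicalSpace X]
    (hWH : ∀ (K : Type) [TopologicalSpace K] [CompactSpace K] [T2Space K] (u : C(K, X)),
      IsClosed (Set.range u))
    {K : Type} [TopologicalSpace K] [CompactSpace K] [T2Space K] (u : C(K, X)) :
    IsClosedMap u := by
  intro C hC
  have : CompactSpace C := isCompact_iff_compactSpace.mp hC.isCompact
  simpa [Set.range_comp] using hWH C (u.comp (ContinuousMap.restrict C (ContinuousMap.id K)))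

/-- If `X` is a weakly Hausdorff topological space (i.e. the image of every
continuous map from a compact Hausdorff space is closed), then for every compact Hausdorff
space `K` and every continuous map `u : K → X`, the image `u(K)`, with the subspace topology,
is a compact Hausdorff space. -/
theorem image_compact_and_t2_of_weaklyHausdorff {X : Type*} [TopologicalSpace X]
    (hWH : ∀ (K : Type) [TopologicalSpace K] [CompactSpace K] [T2Space K] (u : C(K, X)),
      IsClosed (Set.range u))
    (K : Type) [TopologicalSpace K] [CompactSpace K] [T2Space K] (u : C(K, X)) :
    IsCompact (Set.range u) ∧ T2Space (Set.range u) := by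
  have : T1Space X := t1Space_of_weaklyHausdorff hWH
  have : NormalSpace (Set.range u) :=
    ((isClosedMap_of_weaklyHausdorff hWH u).subtype_mk mem_range_self).normalSpace_of_surjective
      u.continuous.rangeFactorization rangeFactorization_surjective
  exact ⟨isCompact_range u.continuous, inferInstance⟩
end

section
/- Let X = (([0,1] ∩ ℚ) ∪ [1,2] ∪ ([2,3] ∩ ℚ)) ⊆ ℝ and Y = [0,2] ∩ ℚ with the subspace topologies, and let f : X → Y be the continuous map with f(x) = x for x ≤ 1, f(x) = 1 for 1 ≤ x ≤ 2, and f(x) = x − 1 for x ≥ 2. Let ℕ∞ denote the one-point compactification of the discrete space ℕ, and let h : ℕ∞ → Y be the continuous map with h(n) = 1 + (−1)ⁿ/(n+2) for n ∈ ℕ and h(∞) = 1. Then there is no continuous map g : ℕ∞ → X with f ∘ g = h; in particular, the induced map f_* : C(ℕ∞, X) → C(ℕ∞, Y) is not surjective. -/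
open Set OnePoint Filter Topology

/-- `X = ([0,1] ∩ ℚ) ∪ [1,2] ∪ ([2,3] ∩ ℚ) ⊆ ℝ`. -/
def Xcounter : Set ℝ :=
  (Icc (0 : ℝ) 1 ∩ range ((↑) : ℚ → ℝ)) ∪ Icc (1 : ℝ) 2 ∪ (Icc (2 : ℝ) 3 ∩ range ((↑) : ℚ → ℝ))

/-- `Y = [0,2] ∩ ℚ ⊆ ℝ`. -/
def Ycounter : Set ℝ :=
  Icc (0 : ℝ) 2 ∩ range ((↑) : ℚ → ℝ)

/-!
Above `1` the collapse `f` is inverted by `y ↦ y + 1`, below `1` by `y ↦ y`. A lift `g` of `h`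
would therefore satisfy `g (2k) = h (2k) + 1` and `g (2k + 1) = h (2k + 1)`, since `h` takes
values above `1` at even and below `1` at odd indices. Letting `k → ∞` and using continuity of
`g` and `h` at `∞` gives `h ∞ + 1 = g ∞ = h ∞`.
-/

lemma OnePoint.tendsto_nat_atTop {Z : Type*} [TopologicalSpace Z] {g : OnePoint ℕ → Z}
    (hg : Continuous g) : Tendsto (fun n : ℕ => g n) atTop (𝓝 (g ∞)) :=
  (continuous_iff_from_nat g).1 hg

lemma Filter.Tendsto.comp_two_mul {Z : Type*} [TopologicalSpace Z] {u : ℕ → Z} {a : Z}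
    (hu : Tendsto u atTop (𝓝 a)) : Tendsto (fun k => u (2 * k)) atTop (𝓝 a) :=
  hu.comp (strictMono_mul_left_of_pos two_pos).tendsto_atTop

lemma Filter.Tendsto.comp_two_mul_add_one {Z : Type*} [TopologicalSpace Z] {u : ℕ → Z} {a : Z}
    (hu : Tendsto u atTop (𝓝 a)) : Tendsto (fun k => u (2 * k + 1)) atTop (𝓝 a) :=
  hu.comp ((strictMono_mul_left_of_pos two_pos).add_const 1).tendsto_atTop

section Collapse

variable {A B : Set ℝ} (f : A → B)
  (hf₁ : ∀ x : A, (x : ℝ) ≤ 1 → (f x : ℝ) = x)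
  (hf₂ : ∀ x : A, 1 ≤ (x : ℝ) → (x : ℝ) ≤ 2 → (f x : ℝ) = 1)
  (hf₃ : ∀ x : A, 2 ≤ (x : ℝ) → (f x : ℝ) = x - 1)
include hf₁ hf₂ hf₃

lemma coe_eq_add_one_of_one_lt_collapse {x : A} (hx : 1 < (f x : ℝ)) :
    (x : ℝ) = f x + 1 := by
  rcases le_or_gt (x : ℝ) 1 with h1 | h1
  · linarith [hf₁ x h1]
  rcases le_or_gt (x : ℝ) 2 with h2 | h2
  · linarith [hf₂ x h1.le h2]
  · linarith [hf₃ x h2.le]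

lemma coe_eq_of_collapse_lt_one {x : A} (hx : (f x : ℝ) < 1) : (x : ℝ) = f x := by
  rcases le_or_gt (x : ℝ) 1 with h1 | h1
  · exact (hf₁ x h1).symm
  rcases le_or_gt (x : ℝ) 2 with h2 | h2
  · linarith [hf₂ x h1.le h2]
  · linarith [hf₃ x h2.le]

end Collapse

theorem no_lift_through_collapse_general
    (f : C(Xcounter, Ycounter))
    (hf₁ : ∀ x : Xcounter, (x : ℝ) ≤ 1 → (f x : ℝ) = (x : ℝ))
    (hf₂ : ∀ x : Xcounter, 1 ≤ (x : ℝ) → (x : ℝ) ≤ 2 → (f x : ℝ) = 1)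
    (hf₃ : ∀ x : Xcounter, 2 ≤ (x : ℝ) → (f x : ℝ) = (x : ℝ) - 1)
    (h : C(OnePoint ℕ, Ycounter))
    (hh₁ : ∀ n : ℕ, (h (n : OnePoint ℕ) : ℝ) = 1 + (-1) ^ n / (n + 2)) :
    (¬ ∃ g : C(OnePoint ℕ, Xcounter), f.comp g = h) ∧
      ¬ Function.Surjective (fun g : C(OnePoint ℕ, Xcounter) => f.comp g) := by
  have no_lift : ¬ ∃ g : C(OnePoint ℕ, Xcounter), f.comp g = h := by
    rintro ⟨g, hg⟩
    have hfg (p : OnePoint ℕ) : f (g p) = h p := DFunLike.congr_fun hg p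
    have hg_lim : Tendsto (fun n : ℕ => (g n : ℝ)) atTop (𝓝 (g ∞)) :=
      tendsto_nat_atTop (continuous_subtype_val.comp g.continuous)
    have hh_lim : Tendsto (fun n : ℕ => (h n : ℝ)) atTop (𝓝 (h ∞)) :=
      tendsto_nat_atTop (continuous_subtype_val.comp h.continuous)
    have h_even (k : ℕ) : (g (2 * k : ℕ) : ℝ) = h (2 * k : ℕ) + 1 := by
      rw [← hfg]
      refine coe_eq_add_one_of_one_lt_collapse f hf₁ hf₂ hf₃ ?_
      rw [hfg, hh₁, (even_two_mul k).neg_one_pow]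
      simp only [lt_add_iff_pos_right]; positivity
    have h_odd (k : ℕ) : (g (2 * k + 1 : ℕ) : ℝ) = h (2 * k + 1 : ℕ) := by
      rw [← hfg]
      refine coe_eq_of_collapse_lt_one f hf₁ hf₂ hf₃ ?_
      rw [hfg, hh₁, (odd_two_mul_add_one k).neg_one_pow, neg_div, ← sub_eq_add_neg]
      simp only [sub_lt_self_iff]; positivity
    have e_even : (g ∞ : ℝ) = h ∞ + 1 := tendsto_nhds_unique hg_lim.comp_two_mul
      (by simpa only [h_even] using (hh_lim.comp_two_mul).add_const 1)
    have e_odd : (g ∞ : ℝ) = h ∞ := tendsto_nhds_unique hg_lim.comp_two_mul_add_one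
      (by simpa only [h_odd] using hh_lim.comp_two_mul_add_one)
    linarith
  exact ⟨no_lift, fun hsurj => no_lift (hsurj h)⟩

/-- Let `f : X → Y` be the continuous map collapsing the middle interval
(`f(x) = x` for `x ≤ 1`, `f(x) = 1` for `1 ≤ x ≤ 2`, `f(x) = x − 1` for `x ≥ 2`), and let
`h : ℕ∞ → Y` be the continuous map with `h(n) = 1 + (−1)ⁿ/(n+2)` and `h(∞) = 1`, where
`ℕ∞` is the one-point compactification of the discrete space `ℕ`. Then there is no continuous
`g : ℕ∞ → X` with `f ∘ g = h`; in particular the induced map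
`f_* : C(ℕ∞, X) → C(ℕ∞, Y)` is not surjective. -/
theorem no_lift_through_collapse
    (f : C(Xcounter, Ycounter))
    (hf₁ : ∀ x : Xcounter, (x : ℝ) ≤ 1 → (f x : ℝ) = (x : ℝ))
    (hf₂ : ∀ x : Xcounter, 1 ≤ (x : ℝ) → (x : ℝ) ≤ 2 → (f x : ℝ) = 1)
    (hf₃ : ∀ x : Xcounter, 2 ≤ (x : ℝ) → (f x : ℝ) = (x : ℝ) - 1)
    (h : C(OnePoint ℕ, Ycounter))
    (hh₁ : ∀ n : ℕ, (h (n : OnePoint ℕ) : ℝ) = 1 + (-1) ^ n / (n + 2))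
    (hh₂ : (h ∞ : ℝ) = 1) :
    (¬ ∃ g : C(OnePoint ℕ, Xcounter), f.comp g = h) ∧
      ¬ Function.Surjective (fun g : C(OnePoint ℕ, Xcounter) => f.comp g) :=
  no_lift_through_collapse_general f hf₁ hf₂ hf₃ h hh₁
end

section
/- Let X be a locally path-connected topological space. Then the endpoint map C([0,1], X) → X × X, sending a path γ to (γ(0), γ(1)), is an open map, where C([0,1], X) carries the compact-open topology. -/
/-!
Given a path `γ` and a compact-open neighbourhood `N` of it, replace `γ` on `[0, ε]` by a path
from a point `x` near `γ 0` to `γ ε`, and on `[1 - ε, 1]` by a path from `γ (1 - ε)` to a point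
`y` near `γ 1`. Local path-connectedness lets these two pieces stay inside arbitrarily small
neighbourhoods of `γ 0` and `γ 1`. A subbasic condition "`K` is mapped into `U`" then survives for
small `ε`: if `0 ∈ K` then `γ 0 ∈ U`, so a small enough neighbourhood of `γ 0` lies in `U`; if
`0 ∉ K`, the closed set `K` misses `[0, ε]` for small `ε`; likewise at `1`. So every `(x, y)` near
`(γ 0, γ 1)` is the pair of endpoints of a path in `N`.
-/

open Set Filter Topology unitInterval

theorem unitInterval.tendsto_symm_zero : Tendsto σ (𝓝 0) (𝓝 1) :=
  symm_zero ▸ continuous_symm.tendsto 0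

theorem eventually_inter_nonempty_imp_subset {T Y : Type*} [TopologicalSpace T]
    [TopologicalSpace Y] {a : T} {K : Set T} (hK : IsClosed K) {x : Y} {U : Set Y}
    (hU : IsOpen U) (hKU : a ∈ K → x ∈ U) :
    ∀ᶠ p in (𝓝 a).smallSets ×ˢ (𝓝 x).smallSets, (K ∩ p.1).Nonempty → p.2 ⊆ U := by
  by_cases ha : a ∈ K
  · filter_upwards [(eventually_smallSets_subset.2 (hU.mem_nhds (hKU ha))).prod_inr _]
      with p hp _ using hp
  · filter_upwards [(eventually_smallSets_subset.2 (hK.isOpen_compl.mem_nhds ha)).prod_inl _]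
      with p hp ⟨t, htK, htp⟩
    exact absurd htK (hp htp)

namespace ContinuousMap

variable {X : Type*} [TopologicalSpace X]

def endModifications (γ : C(I, X)) (a b : I) (V₀ V₁ : Set X) : Set C(I, X) :=
  {g | EqOn g γ (Icc a b) ∧ MapsTo g (Icc 0 a) V₀ ∧ MapsTo g (Icc b 1) V₁}

theorem tendsto_endModifications (γ : C(I, X)) :
    Tendsto (fun p : I × Set X × Set X => γ.endModifications p.1 (σ p.1) p.2.1 p.2.2)
      (𝓝 0 ×ˢ (𝓝 (γ 0)).smallSets ×ˢ (𝓝 (γ 1)).smallSets) (𝓝 γ).smallSets := by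
  rw [nhds_compactOpen]
  simp only [smallSets_iInf, smallSets_principal, tendsto_iInf, tendsto_principal]
  intro K hK U hU hγKU
  have h₀ : ∀ᶠ p : I × Set X × Set X in 𝓝 0 ×ˢ (𝓝 (γ 0)).smallSets ×ˢ (𝓝 (γ 1)).smallSets,
      (K ∩ Icc 0 p.1).Nonempty → p.2.1 ⊆ U :=
    ((tendsto_const_nhds.Icc tendsto_fst).prodMk (tendsto_fst.comp tendsto_snd)).eventually
      (eventually_inter_nonempty_imp_subset hK.isClosed hU (@hγKU 0))
  have h₁ : ∀ᶠ p : I × Set X × Set X in 𝓝 0 ×ˢ (𝓝 (γ 0)).smallSets ×ˢ (𝓝 (γ 1)).smallSets,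
      (K ∩ Icc (σ p.1) 1).Nonempty → p.2.2 ⊆ U :=
    (((tendsto_symm_zero.comp tendsto_fst).Icc tendsto_const_nhds).prodMk
      (tendsto_snd.comp tendsto_snd)).eventually
      (eventually_inter_nonempty_imp_subset hK.isClosed hU (@hγKU 1))
  filter_upwards [h₀, h₁] with ⟨ε, V₀, V₁⟩ h₀ h₁ g ⟨hγ, hV₀, hV₁⟩ t ht
  by_cases hε : t ≤ ε
  · exact h₀ ⟨t, ht, zero_le, hε⟩ (hV₀ ⟨zero_le, hε⟩)
  by_cases hσε : σ ε ≤ t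
  · exact h₁ ⟨t, ht, hσε, le_one t⟩ (hV₁ ⟨hσε, le_one t⟩)
  rw [hγ ⟨(not_le.1 hε).le, (not_le.1 hσε).le⟩]
  exact hγKU ht

theorem exists_mem_endModifications {γ : C(I, X)} {a b : I} (ha : 0 < a) (hab : a < b)
    (hb : b < 1) {x y : X} {V₀ V₁ : Set X} (hx : JoinedIn V₀ x (γ a))
    (hy : JoinedIn V₁ (γ b) y) :
    ∃ g ∈ γ.endModifications a b V₀ V₁, g 0 = x ∧ g 1 = y := by
  obtain ⟨α, hα⟩ := hx
  obtain ⟨β, hβ⟩ := hy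
  have ha₀ : (a : ℝ) ≠ 0 := (coe_pos.2 ha).ne'
  have hb₁ : (1 - b : ℝ) ≠ 0 := sub_ne_zero.2 (coe_lt_one.2 hb).ne'
  let tail : I → X := fun t => if b ≤ t then β.extend ((t - b) / (1 - b)) else γ t
  have tail_of_le : ∀ t ≤ b, tail t = γ t := by
    intro t ht
    by_cases hbt : b ≤ t
    · simp [tail, le_antisymm ht hbt]
    · simp [tail, hbt]
  have tail_cont : Continuous tail :=
    Continuous.if_le (by fun_prop) γ.continuous continuous_const continuous_id
      fun t ht => by simp [← ht]
  let g : C(I, X) :=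
    ⟨fun t => if t ≤ a then α.extend (t / a) else tail t,
      Continuous.if_le (by fun_prop) tail_cont continuous_id continuous_const
        fun t ht => by simp [ht, ha₀, tail_of_le a hab.le]⟩
  refine ⟨g, ⟨fun t ht => ?_, fun t ht => ?_, fun t ht => ?_⟩, by simp [g], ?_⟩
  · by_cases hta : t ≤ a
    · simp [g, le_antisymm hta ht.1, ha₀]
    · simp [g, hta, tail_of_le t ht.2]
  · simp only [g, coe_mk, if_pos ht.2]
    exact hα _
  · simp only [g, coe_mk, if_neg (hab.trans_le ht.1).not_ge, tail, if_pos ht.1]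
    exact hβ _
  · simp [g, tail, (hab.trans hb).not_ge, hb.le, hb₁]

end ContinuousMap

/-- If `X` is locally path-connected, then the endpoint map
`C([0,1], X) → X × X`, `γ ↦ (γ(0), γ(1))`, is an open map (where the mapping space carries
the compact-open topology). -/
theorem isOpenMap_endpoints_of_locPathConnected {X : Type*} [TopologicalSpace X]
    [LocallyPathConnectedSpace X] :
    IsOpenMap fun γ : C(unitInterval, X) => (γ 0, γ 1) := by
  refine isOpenMap_iff_nhds_le.2 fun γ => le_map fun N hN => ?_
  obtain ⟨⟨E, W₀, W₁⟩, ⟨hE, ⟨hW₀, hW₀c⟩, hW₁, hW₁c⟩, hEN⟩ :=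
    ((𝓝 0).basis_sets.prod ((path_connected_basis _).smallSets.prod
      (path_connected_basis _).smallSets)).eventually_iff.1
      (γ.tendsto_endModifications.eventually (eventually_smallSets_subset.2 hN))
  have hsmall : ∀ᶠ ε in 𝓝 0, ε ∈ E ∧ γ ε ∈ W₀ ∧ γ (σ ε) ∈ W₁ ∧ ε < σ ε :=
    Eventually.and hE <| Eventually.and ((γ.continuousAt 0).preimage_mem_nhds hW₀) <|
      (((γ.continuous.tendsto 1).comp tendsto_symm_zero).eventually_mem hW₁).and <|
      tendsto_id.eventually_lt tendsto_symm_zero zero_lt_one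
  have : (𝓝[>] (0 : I)).NeBot := nhdsGT_neBot_of_exists_gt ⟨1, zero_lt_one⟩
  obtain ⟨ε, ⟨hεE, hεW₀, hεW₁, hεσ⟩, hε⟩ :=
    ((hsmall.filter_mono nhdsWithin_le_nhds).and (eventually_mem_nhdsWithin (s := Ioi 0))).exists
  refine mem_of_superset (prod_mem_nhds hW₀ hW₁) fun ⟨x, y⟩ ⟨hx, hy⟩ => ?_
  obtain ⟨g, hg, rfl, rfl⟩ :=
    γ.exists_mem_endModifications hε hεσ (symm_zero ▸ strictAnti_symm hε)
      (hW₀c.joinedIn x hx _ hεW₀) (hW₁c.joinedIn _ hεW₁ y hy)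
  exact ⟨g, hEN (x := (ε, W₀, W₁)) ⟨hεE, mem_powerset subset_rfl, mem_powerset subset_rfl⟩ hg, rfl⟩
end

section
/- Let W, X, Y be topological abelian groups, let f : W → X be a continuous injective group homomorphism that is a closed embedding (a homeomorphism onto its image, which is closed in X), and let p : W → Y be a continuous group homomorphism. Let D = {(f(w), −p(w)) : w ∈ W}, a subgroup of X × Y, and let Z = (X × Y)/D with the quotient topology. Then the map g : Y → Z, y ↦ (0, y) + D, is a closed embedding. (This expresses that in the category of topological abelian groups, the pushout of a regular monomorphism along an arbitrary morphism is again a regular monomorphism.) -/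
/-!
Let `q : X × Y → Z` be the quotient map and `g` the inclusion of `Y`. Then `q⁻¹(range g)` is
`range f × Y`, which is closed, so `range g` is closed. On `range f × Y` the map
`r (x, y) = y + p (f⁻¹ x)` is continuous because `f` is an embedding, and `g ∘ r = q` there;
since `q` is open, such a lift makes `g` an embedding.
-/

open Function Set Topology

theorem isEmbedding_of_isOpenMap_of_lift {A Y Z : Type*} [TopologicalSpace A]
    [TopologicalSpace Y] [TopologicalSpace Z] {q : A → Z} (hq : IsOpenMap q)
    (hq_surj : Surjective q) {g : Y → Z} (hg : Continuous g) (hg_inj : Injective g)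
    {S : Set A} (hS : q ⁻¹' range g ⊆ S) {r : S → Y} (hr : Continuous r)
    (hgr : ∀ a : S, g (r a) = q a) : IsEmbedding g := by
  have hr_eq : ∀ a y, q a = g y → ∃ ha : a ∈ S, r ⟨a, ha⟩ = y := fun a y hay ↦
    have ha : a ∈ S := hS ⟨y, hay.symm⟩
    ⟨ha, hg_inj ((hgr ⟨a, ha⟩).trans hay)⟩
  refine ⟨⟨le_antisymm (continuous_iff_le_induced.mp hg) fun U hU ↦ ?_⟩, hg_inj⟩
  obtain ⟨V, hV, hVU⟩ := isOpen_induced_iff.mp (hU.preimage hr)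
  refine isOpen_induced_iff.mpr ⟨q '' V, hq V hV, Set.ext fun y ↦ ⟨?_, fun hy ↦ ?_⟩⟩
  · rintro ⟨a, haV, hay⟩
    obtain ⟨ha, rfl⟩ := hr_eq a y hay
    exact hVU.subset haV
  · obtain ⟨a, hay⟩ := hq_surj (g y)
    obtain ⟨ha, hra⟩ := hr_eq a y hay
    refine ⟨a, ?_, hay⟩
    rw [← hra] at hy
    exact hVU.superset hy

section Pushout

variable {W X Y : Type*} [AddCommGroup W] [AddCommGroup X] [AddCommGroup Y]

abbrev pushoutInl (f : W →+ X) (p : W →+ Y) (y : Y) : (X × Y) ⧸ (f.prod (-p)).range :=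
  QuotientAddGroup.mk (0, y)

theorem mk_eq_pushoutInl_iff (f : W →+ X) (p : W →+ Y) {x : X} {y y' : Y} :
    (QuotientAddGroup.mk (x, y) : (X × Y) ⧸ (f.prod (-p)).range) = pushoutInl f p y' ↔
      ∃ w, f w = x ∧ y + p w = y' := by
  rw [QuotientAddGroup.eq]
  constructor
  · rintro ⟨w, hw⟩
    simp only [AddMonoidHom.prod_apply, AddMonoidHom.neg_apply, Prod.neg_mk, Prod.mk_add_mk,
      Prod.mk.injEq] at hw
    refine ⟨-w, ?_, ?_⟩
    · simp [hw.1]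
    · rw [map_neg, hw.2]; abel
  · rintro ⟨w, rfl, rfl⟩
    exact ⟨-w, by simp⟩

theorem pushoutInl_injective {f : W →+ X} (hf : Injective f) (p : W →+ Y) :
    Injective (pushoutInl f p) := by
  intro y y' h
  obtain ⟨w, hw, rfl⟩ := (mk_eq_pushoutInl_iff f p).mp h
  rw [hf (hw.trans f.map_zero.symm), map_zero, add_zero]

theorem preimage_range_pushoutInl (f : W →+ X) (p : W →+ Y) :
    QuotientAddGroup.mk ⁻¹' range (pushoutInl f p) = Prod.fst ⁻¹' range f := by
  ext ⟨x, y⟩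
  simp only [mem_preimage, mem_range]
  constructor
  · rintro ⟨y', h⟩
    obtain ⟨w, hw, -⟩ := (mk_eq_pushoutInl_iff f p).mp h.symm
    exact ⟨w, hw⟩
  · rintro ⟨w, rfl⟩
    exact ⟨y + p w, ((mk_eq_pushoutInl_iff f p).mpr ⟨w, rfl, rfl⟩).symm⟩

end Pushout

theorem isClosedEmbedding_pushout_inclusion_general {W X Y : Type*}
    [AddCommGroup W] [TopologicalSpace W]
    [AddCommGroup X] [TopologicalSpace X] [IsTopologicalAddGroup X]
    [AddCommGroup Y] [TopologicalSpace Y] [IsTopologicalAddGroup Y]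
    (f : W →+ X)
    (hf : IsClosedEmbedding f)
    (p : W →+ Y) (hp : Continuous p) :
    IsClosedEmbedding fun y : Y =>
      (QuotientAddGroup.mk (0, y) : (X × Y) ⧸ (f.prod (-p)).range) := by
  have hS := preimage_range_pushoutInl f p
  let e := hf.isEmbedding.toHomeomorph
  have hfe : ∀ x : range f, f (e.symm x) = x := fun x ↦
    congrArg Subtype.val (e.apply_symm_apply x)
  refine ⟨isEmbedding_of_isOpenMap_of_lift QuotientAddGroup.isOpenMap_coe
    QuotientAddGroup.mk_surjective (by fun_prop) (pushoutInl_injective hf.injective p)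
    hS.subset (r := fun a ↦ a.1.2 + p (e.symm ⟨a.1.1, a.2⟩)) (by fun_prop) fun a ↦ ?_, ?_⟩
  · exact ((mk_eq_pushoutInl_iff f p).mpr ⟨_, hfe _, rfl⟩).symm
  · rw [← (QuotientAddGroup.isQuotientMap_mk _).isClosed_preimage]
    exact hS ▸ hf.isClosed_range.preimage continuous_fst

/-- Let `W, X, Y` be topological abelian groups, `f : W → X` a continuous
injective homomorphism which is a closed embedding, and `p : W → Y` a continuous homomorphism.
Let `D = {(f w, −p w) : w ∈ W} ≤ X × Y` and `Z = (X × Y)/D` with the quotient topology.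
Then `g : Y → Z`, `y ↦ (0, y) + D`, is a closed embedding.  (In the category of topological
abelian groups, pushouts of regular monomorphisms are regular monomorphisms.) -/
theorem isClosedEmbedding_pushout_inclusion {W X Y : Type*}
    [AddCommGroup W] [TopologicalSpace W] [IsTopologicalAddGroup W]
    [AddCommGroup X] [TopologicalSpace X] [IsTopologicalAddGroup X]
    [AddCommGroup Y] [TopologicalSpace Y] [IsTopologicalAddGroup Y]
    (f : W →+ X) (hf_cont : Continuous f) (hf_inj : Function.Injective f)
    (hf : IsClosedEmbedding f)
    (p : W →+ Y) (hp : Continuous p) :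
    IsClosedEmbedding fun y : Y =>
      (QuotientAddGroup.mk (0, y) : (X × Y) ⧸ (f.prod (-p)).range) :=
  isClosedEmbedding_pushout_inclusion_general f hf p hp
end

section
/- Let C be a category with pullbacks and let 𝒫 be a class of objects of C. Suppose that for every object X of C there exists P ∈ 𝒫 and a 𝒫-split regular epimorphism P → X. Then every 𝒫-split morphism in C is a regular epimorphism. -/
/-!
Lift a `Proj`-split regular epimorphism `u : P ⟶ Y` along `f` to `s : P ⟶ X`, so `u = s ≫ f`.
A map `e` out of `X` that is compatible with `f` descends along `u` to some `d` with
`u ≫ d = s ≫ e`. To see `f ≫ d = e`, test against an epimorphism `w : R ⟶ X` with `R ∈ Proj`: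
since `u` is `Proj`-split, `w ≫ f = m ≫ u` for some `m`, and then
`w ≫ f ≫ d = m ≫ s ≫ e = w ≫ e` by compatibility of `e` with the pair `(m ≫ s, w)`, which `f`
identifies. So `f` is an effective, hence regular, epimorphism.
-/

open CategoryTheory Limits

universe v u

variable {C : Type u} [Category.{v} C]

/-- A morphism `f : X ⟶ Y` is `Proj`-split if `Hom(P, X) → Hom(P, Y)` is surjective for every
object `P` in the class `Proj`. -/
def PSplit (Proj : C → Prop) {X Y : C} (f : X ⟶ Y) : Prop :=
  ∀ P : C, Proj P → Function.Surjective fun g : P ⟶ X => g ≫ f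

theorem effectiveEpi_of_effectiveEpi_comp_of_epi_factor {P R X Y : C} (f : X ⟶ Y) (s : P ⟶ X)
    [EffectiveEpi (s ≫ f)] (w : R ⟶ X) [Epi w] (m : R ⟶ P) (hm : m ≫ s ≫ f = w ≫ f) :
    EffectiveEpi f where
  effectiveEpi := ⟨{
    desc := fun e he => EffectiveEpi.desc (s ≫ f) (s ≫ e) fun g₁ g₂ hg => by
      simpa only [Category.assoc] using he (g₁ ≫ s) (g₂ ≫ s) (by simpa only [Category.assoc])
    fac := fun e he => by
      rw [← cancel_epi w, ← Category.assoc, ← hm]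
      simp only [Category.assoc, EffectiveEpi.fac]
      simpa only [Category.assoc] using he (m ≫ s) w (by rw [Category.assoc, hm])
    uniq := fun e _ d hd => EffectiveEpi.uniq (s ≫ f) _ _ d (by rw [Category.assoc, hd]) }⟩

theorem PSplit.effectiveEpi {Proj : C → Prop} {X Y : C} {f : X ⟶ Y} (hf : PSplit Proj f)
    {P R : C} (u : P ⟶ Y) [EffectiveEpi u] (hP : Proj P) (hu : PSplit Proj u)
    (w : R ⟶ X) [Epi w] (hR : Proj R) : EffectiveEpi f := by
  obtain ⟨s, rfl⟩ := hf P hP u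
  obtain ⟨m, hm⟩ := hu R hR (w ≫ f)
  exact effectiveEpi_of_effectiveEpi_comp_of_epi_factor f s w m hm

/-- Let `C` be a category with pullbacks and `Proj` a class of objects such that
every object admits a `Proj`-split regular epimorphism from an object of `Proj`. Then every
`Proj`-split morphism in `C` is a regular epimorphism. -/
theorem regularEpi_of_pSplit [HasPullbacks C] (Proj : C → Prop)
    (h : ∀ X : C, ∃ (P : C) (u : P ⟶ X), Proj P ∧ PSplit Proj u ∧ Nonempty (RegularEpi u))
    {X Y : C} (f : X ⟶ Y) (hf : PSplit Proj f) :
    Nonempty (RegularEpi f) := by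
  obtain ⟨P, u, hP, hu, ⟨uReg⟩⟩ := h Y
  obtain ⟨R, w, hR, -, ⟨wReg⟩⟩ := h X
  have := uReg.effectiveEpi
  have := wReg.epi
  have := hf.effectiveEpi u hP hu w hR
  exact ⟨regularEpiOfEffectiveEpi f⟩
end

section
/- Let C be a category with finite coproducts and let 𝒫 be a class of objects of C. A morphism f : X → Y of simplicial objects in C has the right lifting property with respect to all the maps ∂Δⁿ · P → Δⁿ · P (for all n ≥ 0 and P ∈ 𝒫) induced by the boundary inclusions if and only if for every P ∈ 𝒫 the induced map of simplicial sets ([m] ↦ Hom_C(P, Xₘ)) → ([m] ↦ Hom_C(P, Yₘ)) is a trivial Kan fibration (i.e. has the right lifting property with respect to all boundary inclusions ∂Δⁿ → Δⁿ of simplicial sets). -/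
open CategoryTheory Limits Opposite Simplicial

universe v u

variable {C : Type u} [Category.{v} C]

instance (a b : SimplexCategory) : Finite (a ⟶ b) :=
  Finite.of_injective (fun f => (f.toOrderHom : Fin (a.len + 1) → Fin (b.len + 1)))
    (fun f g h => SimplexCategory.Hom.ext' f g (OrderHom.ext _ _ h))

instance (n : SimplexCategory) (m : SimplexCategoryᵒᵖ) :
    Finite ((SSet.stdSimplex.obj n).obj m) :=
  Finite.of_equiv _ (SSet.stdSimplex.objEquiv (n := n) (m := m)).symm

instance (n : ℕ) (m : SimplexCategoryᵒᵖ) : Finite ((SSet.boundary n).toSSet.obj m) :=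
  Subtype.finite

variable [HasFiniteCoproducts C]

/-- `S · P`: the simplicial object with `(S · P)ₘ = ∐_{Sₘ} P`, the coproduct of copies of `P`
indexed by the `m`-simplices of the simplicial set `S`. -/
@[simps]
noncomputable def sTensor (S : SSet.{0}) (P : C)
    [∀ m : SimplexCategoryᵒᵖ, HasColimitsOfShape (Discrete (S.obj m)) C] :
    SimplexCategoryᵒᵖ ⥤ C where
  obj m := ∐ fun _ : S.obj m => P
  map {m m'} g := Sigma.desc fun s => Sigma.ι (fun _ : S.obj m' => P) (S.map g s)
  map_id m := by
    ext s
    simp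
  map_comp {m m' m''} g g' := by
    ext s
    simp

/-- Functoriality of `S · P` in the simplicial set `S`. -/
noncomputable def sTensorMapLeft {S T : SSet.{0}} (σ : S ⟶ T) (P : C)
    [∀ m : SimplexCategoryᵒᵖ, HasColimitsOfShape (Discrete (S.obj m)) C]
    [∀ m : SimplexCategoryᵒᵖ, HasColimitsOfShape (Discrete (T.obj m)) C] :
    sTensor S P ⟶ sTensor T P where
  app m := Sigma.desc fun s => Sigma.ι (fun _ : T.obj m => P) (σ.app m s)
  naturality {m m'} g := by
    dsimp only [sTensor]
    ext s
    simp [NatTrans.naturality_apply]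

/-! Maps `S · P ⟶ Z` correspond to maps of simplicial sets `S ⟶ Hom_C(P, Z•)`, naturally in `S`
and `Z`, and under a bijection of hom-sets natural in both variables lifting problems and their
solutions correspond. The only wrinkle is universes: `S · P` is built from `S : SSet.{0}` while
`Hom_C(P, Z•)` lives in `SSet.{v}`, so the simplices of `Δⁿ` and `∂Δⁿ` are moved across by
`ULift`. -/

namespace CategoryTheory

variable {D E : Type*} [Category D] [Category E] {A B X Y : D} {A' B' X' Y' : E}
  {i : A ⟶ B} {p : X ⟶ Y} {i' : A' ⟶ B'} {p' : X' ⟶ Y'}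

theorem hasLiftingProperty_of_homEquiv
    (eAX : (A ⟶ X) ≃ (A' ⟶ X')) (eAY : (A ⟶ Y) ≃ (A' ⟶ Y'))
    (eBX : (B ⟶ X) ≃ (B' ⟶ X')) (eBY : (B ⟶ Y) ≃ (B' ⟶ Y'))
    (hAp : ∀ a, eAY (a ≫ p) = eAX a ≫ p') (hBp : ∀ b, eBY (b ≫ p) = eBX b ≫ p')
    (hiX : ∀ b, eAX (i ≫ b) = i' ≫ eBX b) (hiY : ∀ b, eAY (i ≫ b) = i' ≫ eBY b)
    [HasLiftingProperty i' p'] : HasLiftingProperty i p := by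
  refine ⟨fun {u v} sq => ?_⟩
  have sq' : CommSq (eAX u) i' p' (eBY v) := ⟨by rw [← hAp, sq.w, hiY]⟩
  exact ⟨⟨⟨eBX.symm sq'.lift, eAX.injective (by rw [hiX, Equiv.apply_symm_apply, sq'.fac_left]),
    eBY.injective (by rw [hBp, Equiv.apply_symm_apply, sq'.fac_right])⟩⟩⟩

theorem hasLiftingProperty_iff_of_homEquiv
    (eAX : (A ⟶ X) ≃ (A' ⟶ X')) (eAY : (A ⟶ Y) ≃ (A' ⟶ Y'))
    (eBX : (B ⟶ X) ≃ (B' ⟶ X')) (eBY : (B ⟶ Y) ≃ (B' ⟶ Y'))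
    (hAp : ∀ a, eAY (a ≫ p) = eAX a ≫ p') (hBp : ∀ b, eBY (b ≫ p) = eBX b ≫ p')
    (hiX : ∀ b, eAX (i ≫ b) = i' ≫ eBX b) (hiY : ∀ b, eAY (i ≫ b) = i' ≫ eBY b) :
    HasLiftingProperty i p ↔ HasLiftingProperty i' p' := by
  constructor <;> intro
  · refine hasLiftingProperty_of_homEquiv (i' := i) (p' := p) eAX.symm eAY.symm eBX.symm eBY.symm
      (fun a => ?_) (fun b => ?_) (fun b => ?_) (fun b => ?_) <;>
      rw [Equiv.symm_apply_eq] <;> simp only [hAp, hBp, hiX, hiY, Equiv.apply_symm_apply]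
  · exact hasLiftingProperty_of_homEquiv eAX eAY eBX eBY hAp hBp hiX hiY

end CategoryTheory

section SimplicialTensor

omit [HasFiniteCoproducts C]

variable (P : C) {Z W : SimplexCategoryᵒᵖ ⥤ C} {S T : SSet.{0}} {S' T' : SSet.{v}}
  [∀ m : SimplexCategoryᵒᵖ, HasColimitsOfShape (Discrete (S.obj m)) C]
  [∀ m : SimplexCategoryᵒᵖ, HasColimitsOfShape (Discrete (T.obj m)) C]
  (eS : ∀ m, S.obj m ≃ S'.obj m)
  (heS : ∀ {m m' : SimplexCategoryᵒᵖ} (g : m ⟶ m') (s : S.obj m),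
    S'.map g (eS m s) = eS m' (S.map g s))

noncomputable def sTensorHomEquiv : (sTensor S P ⟶ Z) ≃ (S' ⟶ Z ⋙ coyoneda.obj (op P)) where
  toFun u :=
    { app m := TypeCat.ofHom fun x => Sigma.ι (fun _ : S.obj m => P) ((eS m).symm x) ≫ u.app m
      naturality {m m'} g := by
        ext x
        have hx : (eS m').symm (S'.map g x) = S.map g ((eS m).symm x) := by
          rw [Equiv.symm_apply_eq, ← heS, Equiv.apply_symm_apply]
        dsimp [coyoneda]
        have h := Sigma.ι (fun _ : S.obj m => P) ((eS m).symm x) ≫= u.naturality g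
        erw [sTensor_map, Sigma.ι_desc_assoc] at h
        rw [hx]
        exact h.trans (Category.assoc _ _ _).symm }
  invFun v :=
    { app m := Sigma.desc fun s => v.app m (eS m s)
      naturality {m m'} g := by
        dsimp only [sTensor]
        ext s
        have hv := NatTrans.naturality_apply v g (eS m s)
        dsimp [coyoneda] at hv ⊢
        simp [heS g s, ← hv] }
  left_inv u := by
    ext m : 2
    refine Sigma.hom_ext _ _ fun s => ?_
    simp
  right_inv v := by
    ext m x
    simp

theorem sTensorHomEquiv_apply_app (u : sTensor S P ⟶ Z) (m : SimplexCategoryᵒᵖ) (x : S'.obj m) :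
    (sTensorHomEquiv P eS heS u).app m x =
      Sigma.ι (fun _ : S.obj m => P) ((eS m).symm x) ≫ u.app m :=
  rfl

theorem sTensorHomEquiv_comp (u : sTensor S P ⟶ Z) (f : Z ⟶ W) :
    sTensorHomEquiv P eS heS (u ≫ f) =
      sTensorHomEquiv P eS heS u ≫ Functor.whiskerRight f (coyoneda.obj (op P)) := by
  ext m x
  exact (Category.assoc _ _ _).symm

theorem sTensorHomEquiv_sTensorMapLeft_comp (eT : ∀ m, T.obj m ≃ T'.obj m)
    (heT : ∀ {m m' : SimplexCategoryᵒᵖ} (g : m ⟶ m') (t : T.obj m),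
      T'.map g (eT m t) = eT m' (T.map g t))
    (σ : S ⟶ T) (σ' : S' ⟶ T') (hσ : ∀ m s, σ'.app m (eS m s) = eT m (σ.app m s))
    (u : sTensor T P ⟶ Z) :
    sTensorHomEquiv P eS heS (sTensorMapLeft σ P ≫ u) = σ' ≫ sTensorHomEquiv P eT heT u := by
  ext m x
  obtain ⟨s, rfl⟩ := (eS m).surjective x
  simp only [TypeCat.Fun.toFun_apply, ConcreteCategory.comp_apply, sTensorHomEquiv_apply_app, hσ,
    Equiv.symm_apply_apply, NatTrans.comp_app]
  exact Sigma.ι_desc_assoc _ s (u.app m)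

end SimplicialTensor

omit [HasFiniteCoproducts C] in
theorem hasLiftingProperty_sTensorMapLeft_iff (P : C) {X Y : SimplexCategoryᵒᵖ ⥤ C} (f : X ⟶ Y)
    {S T : SSet.{0}} {S' T' : SSet.{v}}
    [∀ m : SimplexCategoryᵒᵖ, HasColimitsOfShape (Discrete (S.obj m)) C]
    [∀ m : SimplexCategoryᵒᵖ, HasColimitsOfShape (Discrete (T.obj m)) C]
    (eS : ∀ m, S.obj m ≃ S'.obj m)
    (heS : ∀ {m m' : SimplexCategoryᵒᵖ} (g : m ⟶ m') (s : S.obj m),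
      S'.map g (eS m s) = eS m' (S.map g s))
    (eT : ∀ m, T.obj m ≃ T'.obj m)
    (heT : ∀ {m m' : SimplexCategoryᵒᵖ} (g : m ⟶ m') (t : T.obj m),
      T'.map g (eT m t) = eT m' (T.map g t))
    (σ : S ⟶ T) (σ' : S' ⟶ T') (hσ : ∀ m s, σ'.app m (eS m s) = eT m (σ.app m s)) :
    HasLiftingProperty (sTensorMapLeft σ P) f ↔
      HasLiftingProperty σ' (Functor.whiskerRight f (coyoneda.obj (op P))) :=
  hasLiftingProperty_iff_of_homEquiv (sTensorHomEquiv P eS heS) (sTensorHomEquiv P eS heS)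
    (sTensorHomEquiv P eT heT) (sTensorHomEquiv P eT heT)
    (fun u => sTensorHomEquiv_comp P eS heS u f) (fun u => sTensorHomEquiv_comp P eT heT u f)
    (sTensorHomEquiv_sTensorMapLeft_comp P eS heS eT heT σ σ' hσ)
    (sTensorHomEquiv_sTensorMapLeft_comp P eS heS eT heT σ σ' hσ)

def SSet.stdSimplexULiftEquiv (n : ℕ) (m : SimplexCategoryᵒᵖ) :
    (Δ[n] : SSet.{0}).obj m ≃ (Δ[n] : SSet.{v}).obj m :=
  Equiv.ulift.trans Equiv.ulift.symm

def SSet.boundaryULiftEquiv (n : ℕ) (m : SimplexCategoryᵒᵖ) :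
    (∂Δ[n] : SSet.{0}).obj m ≃ (∂Δ[n] : SSet.{v}).obj m :=
  (SSet.stdSimplexULiftEquiv n m).subtypeEquiv fun _ => Iff.rfl

/-- Let `C` have finite coproducts and let `Proj` be a class of objects.
A morphism `f : X ⟶ Y` of simplicial objects in `C` has the right lifting property with
respect to all maps `∂Δⁿ · P → Δⁿ · P` (`n ≥ 0`, `P ∈ Proj`) induced by the boundary
inclusions if and only if for every `P ∈ Proj` the induced map of simplicial sets
`([m] ↦ Hom_C(P, Xₘ)) → ([m] ↦ Hom_C(P, Yₘ))` is a trivial Kan fibration, i.e. has the right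
lifting property with respect to the boundary inclusions `∂Δⁿ → Δⁿ` of simplicial sets. -/
theorem rlp_boundary_tensor_iff_trivialKanFibration (Proj : C → Prop)
    {X Y : SimplexCategoryᵒᵖ ⥤ C} (f : X ⟶ Y) :
    (∀ (n : ℕ) (P : C), Proj P →
        HasLiftingProperty (sTensorMapLeft (SSet.boundary n).ι P) f) ↔
      ∀ P : C, Proj P → ∀ n : ℕ,
        HasLiftingProperty (SSet.boundary.{v} n).ι
          (Functor.whiskerRight f (coyoneda.obj (op P))) := by
  have lifting_iff (n : ℕ) (P : C) := hasLiftingProperty_sTensorMapLeft_iff P f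
    (SSet.boundaryULiftEquiv n) (fun _ _ => rfl) (SSet.stdSimplexULiftEquiv n) (fun _ _ => rfl)
    (SSet.boundary n).ι (SSet.boundary.{v} n).ι (fun _ _ => rfl)
  exact ⟨fun h P hP n => (lifting_iff n P).mp (h n P hP), fun h n P hP => (lifting_iff n P).mpr (h P hP n)⟩
end

section
/- Let C be an additive category with countable products and let 𝒫 be a class of objects of C. Let A = (A_{m,n}) be a double complex in C (with anticommuting horizontal and vertical differentials) such that A_{m,n} = 0 for m < 0, and suppose that for every n the row complex (A_{m,n})_{m ≥ 0} is 𝒫-exact. Then the product total complex Tot^∏(A), with Tot^∏(A)_k = ∏_{m ≥ 0} A_{m, k−m} and differential the sum of the horizontal and vertical differentials, is 𝒫-exact. -/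
open CategoryTheory Limits

universe v u

variable {C : Type u} [Category.{v} C] [Preadditive C] [HasCountableProducts C]

/-- The `k`-th object of the product total complex of a right half-plane double complex
`A : ℕ → ℤ → C`: the product `∏_{m+n=k} A_{m,n}` (equivalently `∏_{m ≥ 0} A_{m,k−m}`). -/
noncomputable def totObj (A : ℕ → ℤ → C) (k : ℤ) : C :=
  ∏ᶜ fun p : { p : ℕ × ℤ // (p.1 : ℤ) + p.2 = k } => A p.1.1 p.1.2

/-- The differential of the product total complex: the sum of the horizontal and vertical
differentials (`dh m n : A (m+1) n ⟶ A m n` and `dv m n : A m (n+1) ⟶ A m n`). -/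
noncomputable def totD (A : ℕ → ℤ → C)
    (dh : ∀ (m : ℕ) (n : ℤ), A (m + 1) n ⟶ A m n)
    (dv : ∀ (m : ℕ) (n : ℤ), A m (n + 1) ⟶ A m n) (k : ℤ) :
    totObj A (k + 1) ⟶ totObj A k :=
  Pi.lift fun p =>
    Pi.π (fun q : { q : ℕ × ℤ // (q.1 : ℤ) + q.2 = k + 1 } => A q.1.1 q.1.2)
        ⟨(p.1.1 + 1, p.1.2), by have := p.2; push_cast at this ⊢; omega⟩ ≫ dh p.1.1 p.1.2 +
      Pi.π (fun q : { q : ℕ × ℤ // (q.1 : ℤ) + q.2 = k + 1 } => A q.1.1 q.1.2)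
        ⟨(p.1.1, p.1.2 + 1), by have := p.2; push_cast at this ⊢; omega⟩ ≫ dv p.1.1 p.1.2

/-!
Applying `Hom(P, -)` turns the double complex into one of abelian groups with exact rows, and
`Hom(P, Tot^∏ A) = Tot^∏ Hom(P, A)`. There a total cycle `g` is a boundary: solve
`dh x_{m+1} = g_m - dv x_m` column by column, starting from `x_0 = 0`. The right-hand side is a
horizontal cycle because `g` is a total cycle, the previous column was solved, and the
differentials anticommute, so row exactness supplies `x_{m+1}`. The infinitely many columns
`x_m` assemble into a chain because the total complex is formed with products.
-/

namespace DoubleComplex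

variable {B : ℕ → ℤ → Type*} [∀ m n, AddCommGroup (B m n)]
  (Dh : ∀ (m : ℕ) (n : ℤ), B (m + 1) n →+ B m n)
  (Dv : ∀ (m : ℕ) (n : ℤ), B m (n + 1) →+ B m n)

/-- Elements of degree `k` of the product total complex of `B`, as families indexed by the
antidiagonal `m + n = k`. -/
abbrev TotElem (B : ℕ → ℤ → Type*) (k : ℤ) : Type _ :=
  ∀ p : { p : ℕ × ℤ // (p.1 : ℤ) + p.2 = k }, B p.1.1 p.1.2

def totDiff (k : ℤ) (x : TotElem B (k + 1)) : TotElem B k :=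
  fun p => Dh p.1.1 p.1.2 (x ⟨(p.1.1 + 1, p.1.2), by have := p.2; push_cast; omega⟩) +
    Dv p.1.1 p.1.2 (x ⟨(p.1.1, p.1.2 + 1), by have := p.2; omega⟩)

noncomputable def boundingColumn (k : ℤ) (g : TotElem B (k + 1)) :
    ∀ (m : ℕ) (n : ℤ), (m : ℤ) + n = k + 1 + 1 → B m n
  | 0, _, _ => 0
  | m + 1, n, hn =>
    Function.invFun (Dh m n) (g ⟨(m, n), by push_cast at hn; omega⟩ -
      Dv m n (boundingColumn k g m (n + 1) (by push_cast at hn; omega)))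

theorem dh_boundingColumn
    (hdv : ∀ (m : ℕ) (n : ℤ) (x : B m (n + 1 + 1)), Dv m n (Dv m (n + 1) x) = 0)
    (hanti : ∀ (m : ℕ) (n : ℤ) (x : B (m + 1) (n + 1)),
      Dv m n (Dh m (n + 1) x) + Dh m n (Dv (m + 1) n x) = 0)
    (hsurj : ∀ (n : ℤ) (y : B 0 n), ∃ x : B 1 n, Dh 0 n x = y)
    (hexact : ∀ (m : ℕ) (n : ℤ) (y : B (m + 1) n), Dh m n y = 0 →
      ∃ x : B (m + 2) n, Dh (m + 1) n x = y)
    (k : ℤ) (g : TotElem B (k + 1)) (hg : totDiff Dh Dv k g = 0) :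
    ∀ (m : ℕ) (n : ℤ) (hn : (m : ℤ) + n = k + 1),
      Dh m n (boundingColumn Dh Dv k g (m + 1) n (by push_cast; omega)) =
        g ⟨(m, n), hn⟩ - Dv m n (boundingColumn Dh Dv k g m (n + 1) (by omega)) := by
  intro m
  induction m with
  | zero => exact fun n _ => Function.invFun_eq (hsurj n _)
  | succ m ih =>
    intro n hn
    apply Function.invFun_eq
    apply hexact
    have hcycle := congrFun hg ⟨(m, n), by push_cast at hn; omega⟩
    have hsolved := congrArg (Dv m n) (ih (n + 1) (by push_cast at hn; omega))
    have hcomm :=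
      hanti m n (boundingColumn Dh Dv k g (m + 1) (n + 1) (by push_cast at hn ⊢; omega))
    simp only [totDiff, Pi.zero_apply] at hcycle
    rw [map_sub, hdv, sub_zero] at hsolved
    rw [map_sub, eq_neg_of_add_eq_zero_left hcycle, eq_neg_of_add_eq_zero_right hcomm, hsolved]
    abel

theorem exists_totDiff_eq_of_rows_exact
    (hdv : ∀ (m : ℕ) (n : ℤ) (x : B m (n + 1 + 1)), Dv m n (Dv m (n + 1) x) = 0)
    (hanti : ∀ (m : ℕ) (n : ℤ) (x : B (m + 1) (n + 1)),
      Dv m n (Dh m (n + 1) x) + Dh m n (Dv (m + 1) n x) = 0)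
    (hsurj : ∀ (n : ℤ) (y : B 0 n), ∃ x : B 1 n, Dh 0 n x = y)
    (hexact : ∀ (m : ℕ) (n : ℤ) (y : B (m + 1) n), Dh m n y = 0 →
      ∃ x : B (m + 2) n, Dh (m + 1) n x = y)
    (k : ℤ) (g : TotElem B (k + 1)) (hg : totDiff Dh Dv k g = 0) :
    ∃ x : TotElem B (k + 1 + 1), totDiff Dh Dv (k + 1) x = g := by
  refine ⟨fun p => boundingColumn Dh Dv k g p.1.1 p.1.2 p.2, ?_⟩
  funext ⟨⟨m, n⟩, hn⟩
  rw [totDiff, dh_boundingColumn Dh Dv hdv hanti hsurj hexact k g hg m n hn, sub_add_cancel]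

end DoubleComplex

open DoubleComplex

noncomputable def totπ (A : ℕ → ℤ → C) (k : ℤ)
    (p : { p : ℕ × ℤ // (p.1 : ℤ) + p.2 = k }) : totObj A k ⟶ A p.1.1 p.1.2 :=
  Pi.π (fun q : { q : ℕ × ℤ // (q.1 : ℤ) + q.2 = k } => A q.1.1 q.1.2) p

theorem totD_totπ (A : ℕ → ℤ → C) (dh : ∀ (m : ℕ) (n : ℤ), A (m + 1) n ⟶ A m n)
    (dv : ∀ (m : ℕ) (n : ℤ), A m (n + 1) ⟶ A m n) (k : ℤ)
    (p : { p : ℕ × ℤ // (p.1 : ℤ) + p.2 = k }) :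
    totD A dh dv k ≫ totπ A k p =
      totπ A (k + 1) ⟨(p.1.1 + 1, p.1.2), by have := p.2; push_cast; omega⟩ ≫
          dh p.1.1 p.1.2 +
        totπ A (k + 1) ⟨(p.1.1, p.1.2 + 1), by have := p.2; omega⟩ ≫ dv p.1.1 p.1.2 :=
  limit.lift_π _ _

/-- `Hom(P, Tot^∏ A) ≅ Tot^∏ Hom(P, A)` in each degree. -/
noncomputable def homTotEquiv (P : C) (A : ℕ → ℤ → C) (k : ℤ) :
    (P ⟶ totObj A k) ≃ TotElem (fun m n => P ⟶ A m n) k where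
  toFun f p := f ≫ totπ A k p
  invFun x := Pi.lift x
  left_inv _ := Pi.hom_ext _ _ fun _ => limit.lift_π _ _
  right_inv _ := funext fun _ => limit.lift_π _ _

@[simp]
theorem homTotEquiv_zero (P : C) (A : ℕ → ℤ → C) (k : ℤ) : homTotEquiv P A k 0 = 0 :=
  funext fun _ => zero_comp

theorem homTotEquiv_comp_totD {P : C} (A : ℕ → ℤ → C)
    (dh : ∀ (m : ℕ) (n : ℤ), A (m + 1) n ⟶ A m n)
    (dv : ∀ (m : ℕ) (n : ℤ), A m (n + 1) ⟶ A m n) {k : ℤ} (f : P ⟶ totObj A (k + 1)) :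
    homTotEquiv P A k (f ≫ totD A dh dv k) =
      totDiff (fun m n => Preadditive.rightComp P (dh m n))
        (fun m n => Preadditive.rightComp P (dv m n)) k (homTotEquiv P A (k + 1) f) := by
  funext p
  refine (Category.assoc _ _ _).trans ?_
  rw [totD_totπ, Preadditive.comp_add, ← Category.assoc, ← Category.assoc]
  rfl

theorem totalComplex_pExact_of_rows_pExact_general (Proj : C → Prop) (A : ℕ → ℤ → C)
    (dh : ∀ (m : ℕ) (n : ℤ), A (m + 1) n ⟶ A m n)
    (dv : ∀ (m : ℕ) (n : ℤ), A m (n + 1) ⟶ A m n)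
    (hdv : ∀ (m : ℕ) (n : ℤ), dv m (n + 1) ≫ dv m n = 0)
    (hanti : ∀ (m : ℕ) (n : ℤ), dh m (n + 1) ≫ dv m n + dv (m + 1) n ≫ dh m n = 0)
    (hrows : ∀ P : C, Proj P → ∀ n : ℤ,
      (∀ g : P ⟶ A 0 n, ∃ h : P ⟶ A 1 n, h ≫ dh 0 n = g) ∧
      (∀ (m : ℕ) (g : P ⟶ A (m + 1) n), g ≫ dh m n = 0 →
        ∃ h : P ⟶ A (m + 2) n, h ≫ dh (m + 1) n = g)) :
    ∀ P : C, Proj P → ∀ (k : ℤ) (g : P ⟶ totObj A (k + 1)),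
      g ≫ totD A dh dv k = 0 →
        ∃ h : P ⟶ totObj A (k + 1 + 1), h ≫ totD A dh dv (k + 1) = g := by
  intro P hP k g hg
  obtain ⟨x, hx⟩ := exists_totDiff_eq_of_rows_exact
    (fun m n => Preadditive.rightComp P (dh m n)) (fun m n => Preadditive.rightComp P (dv m n))
    (fun m n x => by simp [Preadditive.rightComp, hdv])
    (fun m n x => by simp [Preadditive.rightComp, ← Preadditive.comp_add, hanti])
    (fun n => (hrows P hP n).1) (fun m n => (hrows P hP n).2 m)
    k (homTotEquiv P A (k + 1) g) (by rw [← homTotEquiv_comp_totD, hg, homTotEquiv_zero])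
  refine ⟨(homTotEquiv P A (k + 1 + 1)).symm x, (homTotEquiv P A (k + 1)).injective ?_⟩
  rw [homTotEquiv_comp_totD, Equiv.apply_symm_apply, hx]

/-- **Acyclic Assembly Lemma.** Let `C` be an additive category with countable
products and `Proj` a class of objects of `C`.  Let `A` be a double complex concentrated in
columns `m ≥ 0` (with anticommuting horizontal and vertical differentials squaring to zero)
whose rows are all `Proj`-exact, i.e. applying `Hom(P, −)` to each row gives an exact complex
of abelian groups for every `P ∈ Proj`.  Then the product total complex `Tot^∏(A)`, with
`Tot^∏(A)_k = ∏_{m ≥ 0} A_{m,k−m}` and differential the sum of the horizontal and vertical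
differentials, is `Proj`-exact. -/
theorem totalComplex_pExact_of_rows_pExact (Proj : C → Prop) (A : ℕ → ℤ → C)
    (dh : ∀ (m : ℕ) (n : ℤ), A (m + 1) n ⟶ A m n)
    (dv : ∀ (m : ℕ) (n : ℤ), A m (n + 1) ⟶ A m n)
    (hdh : ∀ (m : ℕ) (n : ℤ), dh (m + 1) n ≫ dh m n = 0)
    (hdv : ∀ (m : ℕ) (n : ℤ), dv m (n + 1) ≫ dv m n = 0)
    (hanti : ∀ (m : ℕ) (n : ℤ), dh m (n + 1) ≫ dv m n + dv (m + 1) n ≫ dh m n = 0)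
    (hrows : ∀ P : C, Proj P → ∀ n : ℤ,
      (∀ g : P ⟶ A 0 n, ∃ h : P ⟶ A 1 n, h ≫ dh 0 n = g) ∧
      (∀ (m : ℕ) (g : P ⟶ A (m + 1) n), g ≫ dh m n = 0 →
        ∃ h : P ⟶ A (m + 2) n, h ≫ dh (m + 1) n = g)) :
    ∀ P : C, Proj P → ∀ (k : ℤ) (g : P ⟶ totObj A (k + 1)),
      g ≫ totD A dh dv k = 0 →
        ∃ h : P ⟶ totObj A (k + 1 + 1), h ≫ totD A dh dv (k + 1) = g :=
  totalComplex_pExact_of_rows_pExact_general Proj A dh dv hdv hanti hrows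
end
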